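/- arXiv:2310.00725 — 4 statements merged into one kernel-verified Lean document; each statement's English description precedes it below -/
import Mathlib

section
/- Let f : X → Y be an abstract simplicial map between abstract simplicial complexes, let α ∈ C^k(Y), β ∈ C^l(Y), and let [u_0,…,u_{k+l}] be a (k+l)-simplex of X such that the vertex map of f is NOT injective on {u_0,…,u_{k+l}} (i.e. f(u_i) = f(u_j) for some i ≠ j). Then the evaluation of the discrete wedge product of the pullbacks vanishes: ((f*α) ∧ (f*β))[u_0,…,u_{k+l}] = Σ_{τ ∈ S_{k+l+1}} sgn(τ) (f*α)[u_{τ(0)},…,u_{τ(k)}] · (f*β)[u_{τ(k)},…,u_{τ(k+l)}] / (k+l+1)! = 0, because the nonzero terms cancel in pairs of opposite sign. -/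
/-!
If `f (u i) = f (u j)` with `i ≠ j`, precomposing with the transposition `(i j)` does not change
`f ∘ u`, hence does not change any term `(f*α ⌣ f*β)(u ∘ τ)`, which only sees `f ∘ u ∘ τ`; but it
flips the sign of `τ`. So the terms of the antisymmetrization cancel in pairs `τ ↔ (i j) τ`.
-/

open Finset
open scoped Classical

/-- An abstract simplicial complex on a vertex type `V`: a downward-closed
family of nonempty finite sets of vertices. -/
structure ASC (V : Type*) where
  faces : Set (Finset V)
  nonempty_of_mem : ∀ s ∈ faces, s.Nonempty
  down_closed : ∀ s ∈ faces, ∀ t ⊆ s, t.Nonempty → t ∈ faces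

variable {V W : Type*} [DecidableEq V] [DecidableEq W]

/-- `v` is an ordered `k`-simplex of `X`: an injective tuple of vertices spanning a face. -/
def IsSimplex (X : ASC V) (k : ℕ) (v : Fin (k + 1) → V) : Prop :=
  Function.Injective v ∧ Finset.image v Finset.univ ∈ X.faces

/-- A (raw) `k`-cochain is alternating: permuting the vertices changes the value by
the sign of the permutation. -/
def IsAlternating (k : ℕ) (α : (Fin (k + 1) → V) → ℝ) : Prop :=
  ∀ (v : Fin (k + 1) → V) (τ : Equiv.Perm (Fin (k + 1))),
    α (v ∘ τ) = ((Equiv.Perm.sign τ : ℤ) : ℝ) * α v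

/-- The coboundary (discrete exterior derivative) of a `k`-cochain. -/
noncomputable def coboundary (k : ℕ) (α : (Fin (k + 1) → V) → ℝ) :
    (Fin (k + 2) → V) → ℝ :=
  fun v => ∑ i : Fin (k + 2), (-1 : ℝ) ^ (i : ℕ) * α (v ∘ i.succAbove)

/-- An abstract simplicial map: a vertex map carrying faces of `X` to faces of `Y`. -/
def IsSimplicialMap (X : ASC V) (Y : ASC W) (f : V → W) : Prop :=
  ∀ s ∈ X.faces, s.image f ∈ Y.faces

/-- Pullback of a `k`-cochain along a vertex map: `(f*α)(c) = α(f♯ c)`, where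
`f♯` sends a tuple with distinct images to its image tuple and to `0` otherwise. -/
noncomputable def pullback (f : V → W) (k : ℕ) (α : (Fin (k + 1) → W) → ℝ) :
    (Fin (k + 1) → V) → ℝ :=
  fun v => if Function.Injective (f ∘ v) then α (f ∘ v) else 0

/-- The cup product of a `k`-cochain and an `l`-cochain. -/
noncomputable def cup (k l : ℕ) (α : (Fin (k + 1) → V) → ℝ) (β : (Fin (l + 1) → V) → ℝ) :
    (Fin (k + l + 1) → V) → ℝ :=
  fun v => α (fun i => v ⟨(i : ℕ), by have := i.isLt; omega⟩) *
    β (fun i => v ⟨k + (i : ℕ), by have := i.isLt; omega⟩)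

/-- The discrete (DEC) wedge product: the antisymmetrized cup product. -/
noncomputable def wedge (k l : ℕ) (α : (Fin (k + 1) → V) → ℝ) (β : (Fin (l + 1) → V) → ℝ) :
    (Fin (k + l + 1) → V) → ℝ :=
  fun v => (1 / (Nat.factorial (k + l + 1) : ℝ)) *
    ∑ τ : Equiv.Perm (Fin (k + l + 1)),
      ((Equiv.Perm.sign τ : ℤ) : ℝ) * cup k l α β (v ∘ τ)


theorem Equiv.Perm.sum_sign_mul_eq_zero_of_swap_mul_invariant {ι R : Type*} [Fintype ι]
    [DecidableEq ι] [CommRing R] {i j : ι} (hij : i ≠ j) (F : Equiv.Perm ι → R)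
    (hF : ∀ τ, F (Equiv.swap i j * τ) = F τ) :
    ∑ τ : Equiv.Perm ι, ((Equiv.Perm.sign τ : ℤ) : R) * F τ = 0 :=
  Finset.sum_involution (fun τ _ => Equiv.swap i j * τ)
    (fun τ _ => by simp [hF, Equiv.Perm.sign_swap hij])
    (fun _ _ _ => (not_congr Equiv.swap_mul_eq_iff).mpr hij) (fun _ _ => Finset.mem_univ _)
    (fun τ _ => Equiv.swap_mul_involutive i j τ)

theorem pullback_congr {V W : Type*} [DecidableEq W] (f : V → W) (k : ℕ)
    (α : (Fin (k + 1) → W) → ℝ) {v w : Fin (k + 1) → V} (h : f ∘ v = f ∘ w) :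
    pullback f k α v = pullback f k α w := by
  rw [pullback, pullback, h]

theorem cup_pullback_congr {V W : Type*} [DecidableEq W] (f : V → W) (k l : ℕ)
    (α : (Fin (k + 1) → W) → ℝ) (β : (Fin (l + 1) → W) → ℝ) {v w : Fin (k + l + 1) → V}
    (h : f ∘ v = f ∘ w) :
    cup k l (pullback f k α) (pullback f l β) v = cup k l (pullback f k α) (pullback f l β) w :=
  congrArg₂ (· * ·) (pullback_congr f k α (funext fun _ => congrFun h _))
    (pullback_congr f l β (funext fun _ => congrFun h _))

theorem wedge_pullback_eq_zero_of_not_injective_general {V W : Type*} [DecidableEq W]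
    (f : V → W) (k l : ℕ)
    (α : (Fin (k + 1) → W) → ℝ)
    (β : (Fin (l + 1) → W) → ℝ)
    (u : Fin (k + l + 1) → V)
    (hninj : ∃ i j : Fin (k + l + 1), i ≠ j ∧ f (u i) = f (u j)) :
    wedge k l (pullback f k α) (pullback f l β) u = 0 := by
  obtain ⟨i, j, hij, hfu⟩ := hninj
  have hswap : ∀ τ : Equiv.Perm (Fin (k + l + 1)),
      f ∘ (u ∘ ⇑(Equiv.swap i j * τ)) = f ∘ (u ∘ τ) := fun τ =>
    funext fun x => Equiv.apply_swap_eq_self (v := f ∘ u) hfu (τ x)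
  rw [wedge, Equiv.Perm.sum_sign_mul_eq_zero_of_swap_mul_invariant hij _
    (fun τ => cup_pullback_congr f k l α β (hswap τ)), mul_zero]

/-- **Vanishing of the wedge of pullbacks in the non-injective case**: if the vertex map of
an abstract simplicial map `f : X → Y` identifies two vertices of a `(k+l)`-simplex
`[u_0,…,u_{k+l}]` of `X`, then the discrete wedge product of the pullbacks vanishes there. -/
theorem wedge_pullback_eq_zero_of_not_injective {V W : Type*} [DecidableEq V] [DecidableEq W]
    (X : ASC V) (Y : ASC W) (f : V → W) (hf : IsSimplicialMap X Y f) (k l : ℕ)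
    (α : (Fin (k + 1) → W) → ℝ) (hα : IsAlternating k α)
    (β : (Fin (l + 1) → W) → ℝ) (hβ : IsAlternating l β)
    (u : Fin (k + l + 1) → V) (hu : IsSimplex X (k + l) u)
    (hninj : ∃ i j : Fin (k + l + 1), i ≠ j ∧ f (u i) = f (u j)) :
    wedge k l (pullback f k α) (pullback f l β) u = 0 :=
  wedge_pullback_eq_zero_of_not_injective_general f k l α β u hninj
end

section
/- Leibniz rule for the discrete exterior derivative and discrete wedge product: let X be an abstract simplicial complex, α ∈ C^k(X) and ω ∈ C^l(X). Then for every (k+l+1)-simplex σ of X (and hence by linearity for every (k+l+1)-chain c), one has (d(α ∧ ω))(σ) = ((dα) ∧ ω)(σ) + (−1)^k (α ∧ (dω))(σ). -/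
open Finset
open scoped Classical

variable {V W : Type*} [DecidableEq V] [DecidableEq W]

/-! The cup product already satisfies the Leibniz rule on every tuple of vertices: in
`d(α ⌣ β)` the faces missing a vertex `i ≤ k` only change the front factor and those missing
`i > k` only the back one, while the last term of `dα ⌣ β` and the first term of
`(-1)ᵏ α ⌣ dβ` are both `± α(v₀ … v_k) β(v_{k+1} …)` with opposite signs and cancel.
Antisymmetrization commutes with the coboundary up to the factor `n + 2` (every face of every
permuted tuple `v ∘ τ` is a permuted face of `v`), and `(k + l + 2)! = (k + l + 2) (k + l + 1)!`
absorbs that factor, so the rule passes from `⌣` to `∧`. -/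

-- Writing tuples as `u ∘ Fin.val` with `u : ℕ → V` turns faces, the two factors of a cup
-- product and the casts between `Fin` types into arithmetic on `ℕ`.
def natSuccAbove (i m : ℕ) : ℕ := if m < i then m else m + 1

lemma Fin.val_succAbove_eq_natSuccAbove {n : ℕ} (i : Fin (n + 1)) (m : Fin n) :
    (i.succAbove m : ℕ) = natSuccAbove i m := by
  unfold Fin.succAbove natSuccAbove
  split_ifs <;> simp_all [Fin.lt_def]

lemma natSuccAbove_of_lt {i m : ℕ} (h : m < i) : natSuccAbove i m = m := if_pos h

lemma natSuccAbove_add_of_le {i k : ℕ} (h : i ≤ k) (m : ℕ) :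
    natSuccAbove i (k + m) = k + 1 + m := by
  unfold natSuccAbove; split_ifs <;> omega

lemma natSuccAbove_add_add (k j m : ℕ) :
    natSuccAbove (k + 1 + j) (k + m) = k + natSuccAbove (j + 1) m := by
  unfold natSuccAbove; split_ifs <;> omega

section Cup

variable {V : Type*}

lemma Fin.exists_comp_val {n : ℕ} (v : Fin (n + 1) → V) :
    ∃ u : ℕ → V, v = u ∘ Fin.val :=
  ⟨fun m => v (Fin.ofNat _ m), funext fun i => by simp⟩

lemma coboundary_comp_val (n : ℕ) (f : (Fin (n + 1) → V) → ℝ) (u : ℕ → V) :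
    coboundary n f (u ∘ Fin.val) =
      ∑ i ∈ range (n + 2), (-1 : ℝ) ^ i * f ((u ∘ natSuccAbove i) ∘ Fin.val) := by
  rw [← Fin.sum_univ_eq_sum_range (fun i => (-1 : ℝ) ^ i * f ((u ∘ natSuccAbove i) ∘ Fin.val))]
  refine sum_congr rfl fun i _ => ?_
  congr 2
  funext m
  simp [Fin.val_succAbove_eq_natSuccAbove]

lemma cup_comp_val (k l : ℕ) (α : (Fin (k + 1) → V) → ℝ) (β : (Fin (l + 1) → V) → ℝ)
    (u : ℕ → V) : cup k l α β (u ∘ Fin.val) = α (u ∘ Fin.val) * β ((u ∘ (k + ·)) ∘ Fin.val) :=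
  rfl

theorem coboundary_cup_comp_val (k l : ℕ) (α : (Fin (k + 1) → V) → ℝ)
    (β : (Fin (l + 1) → V) → ℝ) (u : ℕ → V) :
    coboundary (k + l) (cup k l α β) (u ∘ Fin.val) =
      coboundary k α (u ∘ Fin.val) * β ((u ∘ (k + 1 + ·)) ∘ Fin.val) +
        (-1 : ℝ) ^ k * (α (u ∘ Fin.val) * coboundary l β ((u ∘ (k + ·)) ∘ Fin.val)) := by
  have front (i : ℕ) (hi : k < i) :
      (u ∘ natSuccAbove i) ∘ (Fin.val : Fin (k + 1) → ℕ) = u ∘ Fin.val := by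
    funext m; simp [natSuccAbove_of_lt (show (m : ℕ) < i by omega)]
  have back (i : ℕ) (hi : i ≤ k) : (u ∘ natSuccAbove i) ∘ (k + ·) = u ∘ (k + 1 + ·) := by
    funext m; simp [natSuccAbove_add_of_le hi]
  have back_zero : (u ∘ (k + ·)) ∘ natSuccAbove 0 = u ∘ (k + 1 + ·) := by
    funext m; exact congrArg u (by simp [natSuccAbove]; omega)
  have back_succ (j : ℕ) :
      (u ∘ natSuccAbove (k + 1 + j)) ∘ (k + ·) = (u ∘ (k + ·)) ∘ natSuccAbove (j + 1) := by
    funext m; simp [natSuccAbove_add_add]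
  simp only [coboundary_comp_val, cup_comp_val]
  rw [show k + l + 2 = (k + 1) + (l + 1) by omega, sum_range_add, sum_range_succ _ (k + 1),
    sum_range_succ' _ (l + 1), front (k + 1) (by omega), back_zero]
  have low : ∑ i ∈ range (k + 1), (-1 : ℝ) ^ i *
        (α ((u ∘ natSuccAbove i) ∘ Fin.val) * β (((u ∘ natSuccAbove i) ∘ (k + ·)) ∘ Fin.val)) =
      (∑ i ∈ range (k + 1), (-1 : ℝ) ^ i * α ((u ∘ natSuccAbove i) ∘ Fin.val)) *
        β ((u ∘ (k + 1 + ·)) ∘ Fin.val) := by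
    rw [sum_mul]
    refine sum_congr rfl fun i hi => ?_
    rw [back i (by simp at hi; omega), mul_assoc]
  have high : ∑ j ∈ range (l + 1), (-1 : ℝ) ^ (k + 1 + j) *
        (α ((u ∘ natSuccAbove (k + 1 + j)) ∘ Fin.val) *
          β (((u ∘ natSuccAbove (k + 1 + j)) ∘ (k + ·)) ∘ Fin.val)) =
      (-1 : ℝ) ^ k * (α (u ∘ Fin.val) * ∑ j ∈ range (l + 1),
        (-1 : ℝ) ^ (j + 1) * β (((u ∘ (k + ·)) ∘ natSuccAbove (j + 1)) ∘ Fin.val)) := by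
    rw [mul_sum, mul_sum]
    refine sum_congr rfl fun j _ => ?_
    rw [front _ (by omega), back_succ, pow_add, pow_add]
    ring
  rw [low, high]
  ring

theorem coboundary_cup (k l : ℕ) (h₁ : k + 1 + l + 1 = k + l + 2)
    (h₂ : k + (l + 1) + 1 = k + l + 2) (α : (Fin (k + 1) → V) → ℝ) (β : (Fin (l + 1) → V) → ℝ)
    (v : Fin (k + l + 2) → V) :
    coboundary (k + l) (cup k l α β) v =
      cup (k + 1) l (coboundary k α) β (v ∘ Fin.cast h₁) +
        (-1 : ℝ) ^ k * cup k (l + 1) α (coboundary l β) (v ∘ Fin.cast h₂) := by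
  obtain ⟨u, rfl⟩ := Fin.exists_comp_val v
  exact coboundary_cup_comp_val k l α β u

end Cup

namespace Equiv.Perm

def decomposeFinCycleRange (n : ℕ) : Fin (n + 1) × Perm (Fin n) ≃ Perm (Fin (n + 1)) where
  toFun p := p.1.cycleRange⁻¹ * decomposeFin.symm (0, p.2)
  invFun τ := (τ 0, (decomposeFin ((τ 0).cycleRange * τ)).2)
  left_inv := by
    rintro ⟨i, ρ⟩
    have h0 : (i.cycleRange⁻¹ * decomposeFin.symm (0, ρ)) 0 = i := by
      simp [Perm.mul_apply, Perm.inv_def]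
    simp only [h0, mul_inv_cancel_left, Equiv.apply_symm_apply]
  right_inv τ := by
    set d := decomposeFin ((τ 0).cycleRange * τ) with hd
    have hd0 : d.1 = 0 := by
      rw [← decomposeFin_symm_apply_zero d.1 d.2, hd, Prod.mk.eta, Equiv.symm_apply_apply,
        Perm.mul_apply, Fin.cycleRange_self]
    change (τ 0).cycleRange⁻¹ * decomposeFin.symm (0, d.2) = τ
    have hlift : decomposeFin.symm (0, d.2) = decomposeFin.symm d := by rw [← hd0]
    rw [hlift, hd, Equiv.symm_apply_apply, inv_mul_cancel_left]

lemma decomposeFinCycleRange_apply_succ {n : ℕ} (i : Fin (n + 1)) (ρ : Perm (Fin n))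
    (m : Fin n) : decomposeFinCycleRange n (i, ρ) m.succ = i.succAbove (ρ m) := by
  simp [decomposeFinCycleRange, Perm.mul_apply, Perm.inv_def]

lemma sign_decomposeFinCycleRange {n : ℕ} (i : Fin (n + 1)) (ρ : Perm (Fin n)) :
    sign (decomposeFinCycleRange n (i, ρ)) = (-1) ^ (i : ℕ) * sign ρ := by
  simp [decomposeFinCycleRange, Fin.sign_cycleRange, decomposeFin.symm_sign]

end Equiv.Perm

section Antisymmetrize

variable {V : Type*}

def antisymmetrize (n : ℕ) (f : (Fin n → V) → ℝ) : (Fin n → V) → ℝ :=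
  fun v => ∑ τ : Equiv.Perm (Fin n), ((Equiv.Perm.sign τ : ℤ) : ℝ) * f (v ∘ τ)

lemma antisymmetrize_add_mul (n : ℕ) (f g : (Fin n → V) → ℝ) (c : ℝ) (v : Fin n → V) :
    antisymmetrize n (fun x => f x + c * g x) v =
      antisymmetrize n f v + c * antisymmetrize n g v := by
  simp only [antisymmetrize, mul_add, sum_add_distrib, mul_sum, mul_left_comm c]

lemma coboundary_const_mul (n : ℕ) (c : ℝ) (f : (Fin (n + 1) → V) → ℝ) (v : Fin (n + 2) → V) :
    coboundary n (fun x => c * f x) v = c * coboundary n f v := by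
  simp only [coboundary, mul_sum, mul_left_comm c]

lemma wedge_eq_antisymmetrize (k l : ℕ) (α : (Fin (k + 1) → V) → ℝ)
    (β : (Fin (l + 1) → V) → ℝ) :
    wedge k l α β =
      fun v => 1 / ((k + l + 1).factorial : ℝ) * antisymmetrize (k + l + 1) (cup k l α β) v :=
  rfl

lemma wedge_comp_cast {n : ℕ} (k l : ℕ) (h : k + l + 1 = n) (α : (Fin (k + 1) → V) → ℝ)
    (β : (Fin (l + 1) → V) → ℝ) (v : Fin n → V) :
    wedge k l α β (v ∘ Fin.cast h) =
      1 / (n.factorial : ℝ) * antisymmetrize n (fun x => cup k l α β (x ∘ Fin.cast h)) v := by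
  subst h
  rfl

/-- Deleting the first vertex of `v ∘ τ` and summing over all `τ` produces every face of `v`
with the sign `(-1) ^ i` of its missing vertex `i = τ 0`. -/
lemma sum_sign_mul_comp_succ (n : ℕ) (f : (Fin (n + 1) → V) → ℝ) (v : Fin (n + 2) → V) :
    ∑ τ : Equiv.Perm (Fin (n + 2)), ((Equiv.Perm.sign τ : ℤ) : ℝ) * f ((v ∘ τ) ∘ Fin.succ) =
      coboundary n (antisymmetrize (n + 1) f) v := by
  rw [← (Equiv.Perm.decomposeFinCycleRange (n + 1)).sum_comp, Fintype.sum_prod_type]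
  refine sum_congr rfl fun i _ => ?_
  rw [antisymmetrize, mul_sum]
  refine sum_congr rfl fun ρ _ => ?_
  have hface : (v ∘ Equiv.Perm.decomposeFinCycleRange (n + 1) (i, ρ)) ∘ Fin.succ =
      (v ∘ i.succAbove) ∘ ρ :=
    funext fun m => congrArg v (Equiv.Perm.decomposeFinCycleRange_apply_succ i ρ m)
  rw [hface, Equiv.Perm.sign_decomposeFinCycleRange]
  push_cast
  ring

lemma sum_sign_mul_comp_succAbove (n : ℕ) (f : (Fin (n + 1) → V) → ℝ) (v : Fin (n + 2) → V)
    (j : Fin (n + 2)) :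
    ∑ τ : Equiv.Perm (Fin (n + 2)), ((Equiv.Perm.sign τ : ℤ) : ℝ) * f ((v ∘ τ) ∘ j.succAbove) =
      (-1) ^ (j : ℕ) *
        ∑ τ : Equiv.Perm (Fin (n + 2)), ((Equiv.Perm.sign τ : ℤ) : ℝ) * f ((v ∘ τ) ∘ Fin.succ) := by
  rw [mul_sum, ← Equiv.sum_comp (Equiv.mulRight j.cycleRange)]
  refine sum_congr rfl fun τ _ => ?_
  have hface : (v ∘ ⇑(τ * j.cycleRange)) ∘ j.succAbove = (v ∘ τ) ∘ Fin.succ :=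
    funext fun m => by simp
  rw [Equiv.coe_mulRight, hface, Equiv.Perm.sign_mul, Fin.sign_cycleRange]
  push_cast
  ring

theorem antisymmetrize_coboundary (n : ℕ) (f : (Fin (n + 1) → V) → ℝ) (v : Fin (n + 2) → V) :
    antisymmetrize (n + 2) (coboundary n f) v =
      (n + 2 : ℝ) * coboundary n (antisymmetrize (n + 1) f) v := by
  calc antisymmetrize (n + 2) (coboundary n f) v
      = ∑ j : Fin (n + 2), (-1) ^ (j : ℕ) * ∑ τ : Equiv.Perm (Fin (n + 2)),
          ((Equiv.Perm.sign τ : ℤ) : ℝ) * f ((v ∘ τ) ∘ j.succAbove) := by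
        simp only [antisymmetrize, coboundary, mul_sum]
        rw [sum_comm]
        simp only [mul_left_comm]
    _ = ∑ _j : Fin (n + 2), ∑ τ : Equiv.Perm (Fin (n + 2)),
          ((Equiv.Perm.sign τ : ℤ) : ℝ) * f ((v ∘ τ) ∘ Fin.succ) := by
        refine sum_congr rfl fun j _ => ?_
        rw [sum_sign_mul_comp_succAbove, ← mul_assoc, ← pow_add, Even.neg_one_pow ⟨_, rfl⟩,
          one_mul]
    _ = (n + 2 : ℝ) * coboundary n (antisymmetrize (n + 1) f) v := by
        rw [sum_const, card_univ, Fintype.card_fin, nsmul_eq_mul, sum_sign_mul_comp_succ]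
        push_cast
        ring

end Antisymmetrize

theorem leibniz_wedge {V : Type*} (k l : ℕ)
    (α : (Fin (k + 1) → V) → ℝ)
    (ω : (Fin (l + 1) → V) → ℝ)
    (σ : Fin (k + l + 2) → V) :
    coboundary (k + l) (wedge k l α ω) σ =
      wedge (k + 1) l (coboundary k α) ω
          (σ ∘ Fin.cast (by omega : (k + 1) + l + 1 = k + l + 2)) +
        (-1 : ℝ) ^ k *
          wedge k (l + 1) α (coboundary l ω)
            (σ ∘ Fin.cast (by omega : k + (l + 1) + 1 = k + l + 2)) := by
  calc coboundary (k + l) (wedge k l α ω) σ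
      = 1 / ((k + l + 1).factorial : ℝ) *
          coboundary (k + l) (antisymmetrize (k + l + 1) (cup k l α ω)) σ := by
        rw [wedge_eq_antisymmetrize, coboundary_const_mul]
    _ = 1 / ((k + l + 2).factorial : ℝ) *
          antisymmetrize (k + l + 2) (coboundary (k + l) (cup k l α ω)) σ := by
        rw [antisymmetrize_coboundary, Nat.factorial_succ (k + l + 1)]
        push_cast
        field_simp
        ring
    _ = _ := by
        rw [funext (coboundary_cup k l (by omega) (by omega) α ω), antisymmetrize_add_mul,
          wedge_comp_cast, wedge_comp_cast]
        ring
end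

section
/- Averaging interpretation of the discrete wedge product (second form): let X be an abstract simplicial complex, α ∈ C^k(X), β ∈ C^l(X), and σ a (k+l)-simplex in X. Then (α ∧ β)(σ) = (1 / C(k+l+1, l+1)) · Σ_{f an l-face of σ} ( (1/(l+1)) Σ_{v a vertex of f} α(v ∗ (σ∖f)) ) · β(f), where the sum is over all l-dimensional faces f of σ and, inside, over all vertices v of f; here σ∖f is the face of σ spanned by the vertices of σ not in f, v ∗ (σ∖f) is the simplex spanned by v together with the vertices of σ∖f, and the orientations of f and v ∗ (σ∖f) are chosen so that the vertex ordering (f∖{v}, v, σ∖f) corresponds to an even permutation of the chosen ordering of σ in S_{k+l+1}. -/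
/-!
Group the permutations `τ` of the antisymmetrisation by their pointed back face: the set of
positions `τ '' {k, …, k + l}` together with `τ k`. Two permutations with the same pointed back
face differ on the right by a permutation preserving both blocks of the cup product, whose sign is
the product of the signs of its two block restrictions; as `α` and `β` are alternating,
`sgn τ · (α ⌣ β)(σ ∘ τ)` only depends on the pointed back face. The fibres of this map are cosets
of a stabiliser, so they all have the same size, and averaging over all permutations becomes
averaging over the `C(k + l + 1, l + 1) · (l + 1)` pointed `(l + 1)`-subsets, on each of which
`hcompat` evaluates the summand.
-/

open Finset
open scoped Classical

variable {V W : Type*} [DecidableEq V] [DecidableEq W]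

namespace Equiv.Perm

variable {α β γ : Type*}

theorem exists_eq_comp_of_range_eq {f g : α → γ} (hf : Function.Injective f)
    (hg : Function.Injective g) (h : Set.range f = Set.range g) :
    ∃ u : Perm α, f = g ∘ u :=
  ⟨(ofInjective f hf).trans ((setCongr h).trans (ofInjective g hg).symm), funext fun a => by
    simp [apply_ofInjective_symm hg]⟩

theorem sign_eq_mul_of_comp_eq_comp [Fintype α] [Fintype β] [Fintype γ] [DecidableEq α]
    [DecidableEq β] [DecidableEq γ]
    {f : α ↪ γ} {g : β ↪ γ} (hcover : ∀ x, x ∈ Set.range f ∨ x ∈ Set.range g)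
    {π : Perm γ} {u : Perm α} {w : Perm β} (hu : ∀ a, π (f a) = f (u a))
    (hw : ∀ b, π (g b) = g (w b)) (hfix : ∀ a b, f a = g b → u a = a) :
    sign π = sign u * sign w := by
  suffices π = u.viaFintypeEmbedding f * w.viaFintypeEmbedding g by
    rw [this, map_mul, viaFintypeEmbedding_sign, viaFintypeEmbedding_sign]
  ext x
  rcases hcover x with ⟨a, rfl⟩ | ⟨b, rfl⟩
  · have hw_fix : ∀ b, g b = f a → w.viaFintypeEmbedding g (f a) = f a := by
      intro b hb
      have : g (w b) = g b := by rw [← hw, hb, hu, hfix a b hb.symm]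
      rw [← hb, viaFintypeEmbedding_apply_image, g.injective this]
    rw [Perm.mul_apply, hu]
    by_cases hmem : f a ∈ Set.range g
    · obtain ⟨b, hb⟩ := hmem
      rw [hw_fix b hb, viaFintypeEmbedding_apply_image]
    · rw [viaFintypeEmbedding_apply_notMem_range _ _ hmem, viaFintypeEmbedding_apply_image]
  · rw [Perm.mul_apply, hw, viaFintypeEmbedding_apply_image]
    by_cases hmem : g (w b) ∈ Set.range f
    · obtain ⟨a, ha⟩ := hmem
      rw [← ha, viaFintypeEmbedding_apply_image, hfix a (w b) ha]
    · rw [viaFintypeEmbedding_apply_notMem_range _ _ hmem]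

end Equiv.Perm

section FiberAverage

variable {G β : Type*} [Group G] [Fintype G] [DecidableEq β] {f : G → β}

theorem card_fiber_eq_card_fiber_one
    (hf : ∀ g h h', f h = f h' → f (g * h) = f (g * h')) (g : G) :
    #{h | f h = f g} = #{h | f h = f 1} := by
  refine Finset.card_nbij' (g⁻¹ * ·) (g * ·) ?_ ?_ ?_ ?_
  · intro h hh
    simp only [coe_filter, mem_univ, true_and, Set.mem_ofPred_eq] at hh ⊢
    simpa using hf g⁻¹ h g hh
  · intro h hh
    simp only [coe_filter, mem_univ, true_and, Set.mem_ofPred_eq] at hh ⊢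
    simpa using hf g h 1 hh
  · intro h _
    simp
  · intro h _
    simp

theorem sum_comp_eq_card_fiber_nsmul_sum {M : Type*} [AddCommMonoid M]
    (hf : ∀ g h h', f h = f h' → f (g * h) = f (g * h')) {t : Finset β}
    (hmaps : ∀ g, f g ∈ t) (hsurj : ∀ b ∈ t, ∃ g, f g = b) (φ : β → M) :
    ∑ g, φ (f g) = #{h | f h = f 1} • ∑ b ∈ t, φ b := by
  rw [← Finset.sum_fiberwise_of_maps_to (fun g _ => hmaps g), Finset.smul_sum]
  refine Finset.sum_congr rfl fun b hb => ?_
  obtain ⟨g, rfl⟩ := hsurj b hb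
  rw [Finset.sum_congr rfl fun h hh => congrArg φ (Finset.mem_filter.1 hh).2, Finset.sum_const,
    card_fiber_eq_card_fiber_one hf]

theorem sum_comp_div_card_eq_sum_div_card {K : Type*} [Semifield K] [CharZero K]
    (hf : ∀ g h h', f h = f h' → f (g * h) = f (g * h')) {t : Finset β}
    (hmaps : ∀ g, f g ∈ t) (hsurj : ∀ b ∈ t, ∃ g, f g = b) (φ : β → K) :
    (∑ g, φ (f g)) / Fintype.card G = (∑ b ∈ t, φ b) / #t := by
  have hcard : Fintype.card G = #{h | f h = f 1} * #t := by
    simpa using sum_comp_eq_card_fiber_nsmul_sum hf hmaps hsurj (fun _ => (1 : ℕ))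
  have hfiber : (#{h | f h = f 1} : K) ≠ 0 := by
    have := Fintype.card_ne_zero (α := G)
    rw [hcard] at this
    exact_mod_cast left_ne_zero_of_mul this
  rw [sum_comp_eq_card_fiber_nsmul_sum hf hmaps hsurj, hcard, nsmul_eq_mul, Nat.cast_mul,
    mul_div_mul_left _ _ hfiber]

end FiberAverage

section PointedSubsets

variable (ι : Type*) [Fintype ι] [DecidableEq ι] (m : ℕ)

def pointedSubsets : Finset (Finset ι × ι) :=
  {p ∈ powersetCard m univ ×ˢ univ | p.2 ∈ p.1}

variable {ι m}

theorem mem_pointedSubsets {p : Finset ι × ι} :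
    p ∈ pointedSubsets ι m ↔ #p.1 = m ∧ p.2 ∈ p.1 := by
  simp [pointedSubsets, mem_powersetCard]

theorem sum_pointedSubsets {M : Type*} [AddCommMonoid M] (H : Finset ι → ι → M) :
    ∑ p ∈ pointedSubsets ι m, H p.1 p.2 = ∑ F ∈ powersetCard m univ, ∑ v ∈ F, H F v :=
  Finset.sum_finset_product _ _ _ fun p => by simp [pointedSubsets]

theorem card_pointedSubsets : #(pointedSubsets ι m) = (Fintype.card ι).choose m * m := by
  rw [card_eq_sum_ones, sum_pointedSubsets (fun _ _ => 1)]
  simp only [sum_const, smul_eq_mul, mul_one]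
  rw [Finset.sum_congr rfl fun F hF => (mem_powersetCard.1 hF).2, sum_const, card_powersetCard,
    card_univ, smul_eq_mul]

end PointedSubsets

section CupFaces

open Equiv

variable {k l : ℕ} {V : Type*}

variable (k l) in
def frontFace : Fin (k + 1) ↪ Fin (k + l + 1) :=
  ⟨fun i => ⟨i, by omega⟩, fun i j h => Fin.ext (Fin.mk.inj h)⟩

variable (k l) in
def backFace : Fin (l + 1) ↪ Fin (k + l + 1) :=
  ⟨fun j => ⟨k + j, by omega⟩, fun i j h => Fin.ext (by simpa using Fin.mk.inj h)⟩

@[simp]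
theorem val_frontFace (i : Fin (k + 1)) : (frontFace k l i : ℕ) = i :=
  rfl

@[simp]
theorem val_backFace (j : Fin (l + 1)) : (backFace k l j : ℕ) = k + j :=
  rfl

theorem cup_apply (α : (Fin (k + 1) → V) → ℝ) (β : (Fin (l + 1) → V) → ℝ)
    (v : Fin (k + l + 1) → V) :
    cup k l α β v = α (v ∘ frontFace k l) * β (v ∘ backFace k l) :=
  rfl

theorem mem_range_frontFace_or_backFace (x : Fin (k + l + 1)) :
    x ∈ Set.range (frontFace k l) ∨ x ∈ Set.range (backFace k l) := by
  by_cases hx : (x : ℕ) ≤ k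
  · exact Or.inl ⟨⟨x, by omega⟩, rfl⟩
  · exact Or.inr ⟨⟨x - k, by omega⟩, Fin.ext (by simp; omega)⟩

theorem frontFace_eq_backFace_iff {i : Fin (k + 1)} {j : Fin (l + 1)} :
    frontFace k l i = backFace k l j ↔ i = Fin.last k ∧ j = 0 := by
  simp only [Fin.ext_iff, val_frontFace, val_backFace, Fin.val_last, Fin.val_zero]
  omega

theorem range_frontFace :
    Set.range (frontFace k l) = insert (backFace k l 0) (Set.range (backFace k l))ᶜ := by
  ext x
  simp only [Set.mem_range, Set.mem_insert_iff, Set.mem_compl_iff, not_exists, Fin.ext_iff,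
    val_frontFace, val_backFace, Fin.val_zero]
  constructor
  · rintro ⟨i, hi⟩
    by_cases hik : (i : ℕ) = k
    · exact Or.inl (by omega)
    · exact Or.inr fun j => by omega
  · rintro (hx | hx)
    · exact ⟨Fin.last k, by simp [hx]⟩
    · refine ⟨⟨x, ?_⟩, rfl⟩
      by_contra h
      exact hx ⟨x - k, by omega⟩ (by dsimp only; omega)

variable (k l) in
def pointedBackFace (τ : Perm (Fin (k + l + 1))) :
    Finset (Fin (k + l + 1)) × Fin (k + l + 1) :=
  (univ.image (τ ∘ backFace k l), τ (backFace k l 0))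

theorem pointedBackFace_mul (ρ τ : Perm (Fin (k + l + 1))) :
    pointedBackFace k l (ρ * τ) =
      ((pointedBackFace k l τ).1.image ρ, ρ (pointedBackFace k l τ).2) := by
  simp [pointedBackFace, image_image, Function.comp_def]

theorem pointedBackFace_mul_congr (ρ τ τ' : Perm (Fin (k + l + 1)))
    (h : pointedBackFace k l τ = pointedBackFace k l τ') :
    pointedBackFace k l (ρ * τ) = pointedBackFace k l (ρ * τ') := by
  rw [pointedBackFace_mul, pointedBackFace_mul, h]

theorem pointedBackFace_mem_pointedSubsets (τ : Perm (Fin (k + l + 1))) :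
    pointedBackFace k l τ ∈ pointedSubsets (Fin (k + l + 1)) (l + 1) := by
  rw [mem_pointedSubsets, pointedBackFace]
  refine ⟨?_, mem_image_of_mem _ (mem_univ 0)⟩
  rw [card_image_of_injective _ (τ.injective.comp (backFace k l).injective), card_univ,
    Fintype.card_fin]

theorem exists_perm_of_pointedBackFace_eq_one {π : Perm (Fin (k + l + 1))}
    (hπ : pointedBackFace k l π = pointedBackFace k l 1) :
    ∃ (u₁ : Perm (Fin (k + 1))) (u₂ : Perm (Fin (l + 1))),
      π ∘ frontFace k l = frontFace k l ∘ u₁ ∧ π ∘ backFace k l = backFace k l ∘ u₂ ∧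
        Perm.sign π = Perm.sign u₁ * Perm.sign u₂ := by
  simp only [pointedBackFace, Prod.mk.injEq, Perm.coe_one, Function.id_comp, id] at hπ
  obtain ⟨himage, hpivot⟩ := hπ
  have hback : Set.range (π ∘ backFace k l) = Set.range (backFace k l) := by
    simpa [Set.image_univ, Function.comp_def] using
      congrArg (fun s : Finset _ => (s : Set (Fin (k + l + 1)))) himage
  have hfront : Set.range (π ∘ frontFace k l) = Set.range (frontFace k l) := by
    rw [Set.range_comp, range_frontFace, Set.image_insert_eq, Set.image_compl_eq π.bijective,
      ← Set.range_comp, hback, hpivot]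
  obtain ⟨u₁, hu₁⟩ := Perm.exists_eq_comp_of_range_eq
    (π.injective.comp (frontFace k l).injective) (frontFace k l).injective hfront
  obtain ⟨u₂, hu₂⟩ := Perm.exists_eq_comp_of_range_eq
    (π.injective.comp (backFace k l).injective) (backFace k l).injective hback
  refine ⟨u₁, u₂, hu₁, hu₂, Perm.sign_eq_mul_of_comp_eq_comp
    mem_range_frontFace_or_backFace (congrFun hu₁) (congrFun hu₂) fun i j hij => ?_⟩
  obtain ⟨rfl, rfl⟩ := frontFace_eq_backFace_iff.1 hij
  apply (frontFace k l).injective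
  rw [← Function.comp_apply (f := frontFace k l), ← hu₁, Function.comp_apply, hij, hpivot]

theorem cup_comp_of_pointedBackFace_eq_one {α : (Fin (k + 1) → V) → ℝ}
    {β : (Fin (l + 1) → V) → ℝ} (hα : IsAlternating k α) (hβ : IsAlternating l β)
    (v : Fin (k + l + 1) → V) {π : Perm (Fin (k + l + 1))}
    (hπ : pointedBackFace k l π = pointedBackFace k l 1) :
    cup k l α β (v ∘ π) = Perm.sign π * cup k l α β v := by
  obtain ⟨u₁, u₂, hu₁, hu₂, hsign⟩ := exists_perm_of_pointedBackFace_eq_one hπ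
  rw [cup_apply, cup_apply, Function.comp_assoc, hu₁, Function.comp_assoc, hu₂,
    ← Function.comp_assoc, hα, ← Function.comp_assoc, hβ, hsign]
  push_cast
  ring

theorem sign_mul_cup_comp_eq_of_pointedBackFace_eq {α : (Fin (k + 1) → V) → ℝ}
    {β : (Fin (l + 1) → V) → ℝ} (hα : IsAlternating k α) (hβ : IsAlternating l β)
    (σ : Fin (k + l + 1) → V) {ρ τ : Perm (Fin (k + l + 1))}
    (h : pointedBackFace k l τ = pointedBackFace k l ρ) :
    Perm.sign τ * cup k l α β (σ ∘ τ) = Perm.sign ρ * cup k l α β (σ ∘ ρ) := by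
  obtain ⟨π, rfl⟩ : ∃ π, τ = ρ * π := ⟨ρ⁻¹ * τ, by group⟩
  have hπ : pointedBackFace k l π = pointedBackFace k l 1 := by
    simpa using pointedBackFace_mul_congr ρ⁻¹ (ρ * π) ρ h
  have hsq : ((Perm.sign π : ℤ) : ℝ) * Perm.sign π = 1 := by
    rw [← Int.cast_mul, ← Units.val_mul, Int.units_mul_self, Units.val_one, Int.cast_one]
  rw [Perm.coe_mul, ← Function.comp_assoc, cup_comp_of_pointedBackFace_eq_one hα hβ _ hπ,
    map_mul]
  push_cast
  linear_combination (Perm.sign ρ * cup k l α β (σ ∘ ρ) : ℝ) * hsq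

theorem pointedBackFace_eq_of_apply_backFace {F : Finset (Fin (k + l + 1))} (hF : #F = l + 1)
    {b : Fin (l + 1) → Fin (k + l + 1)} (hb : ∀ j, b j ∈ F) {ρ : Perm (Fin (k + l + 1))}
    {s : Perm (Fin (l + 1))} (hρ : ∀ j, ρ (backFace k l j) = b (s j)) :
    pointedBackFace k l ρ = (F, ρ (backFace k l 0)) := by
  refine Prod.ext (eq_of_subset_of_card_le ?_ ?_) rfl
  · rintro _ hx
    obtain ⟨j, -, rfl⟩ := mem_image.1 hx
    simpa only [Function.comp_apply, hρ] using hb (s j)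
  · rw [hF, pointedBackFace, card_image_of_injective _ (ρ.injective.comp (backFace k l).injective),
      card_univ, Fintype.card_fin]

theorem sign_mul_cup_comp_eq_of_apply_faces {α : (Fin (k + 1) → V) → ℝ}
    {β : (Fin (l + 1) → V) → ℝ} (hα : IsAlternating k α) (hβ : IsAlternating l β)
    (σ : Fin (k + l + 1) → V) {ρ : Perm (Fin (k + l + 1))}
    {b : Fin (l + 1) → Fin (k + l + 1)} {c : Fin (k + 1) → Fin (k + l + 1)}
    {s : Perm (Fin (l + 1))} {s' : Perm (Fin (k + 1))}
    (hρb : ∀ j, ρ (backFace k l j) = b (s j)) (hρc : ∀ i, ρ (frontFace k l i) = c (s' i))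
    (hsign : Perm.sign ρ * Perm.sign s * Perm.sign s' = 1) :
    Perm.sign ρ * cup k l α β (σ ∘ ρ) = α (σ ∘ c) * β (σ ∘ b) := by
  have hfront : (σ ∘ ρ) ∘ frontFace k l = (σ ∘ c) ∘ s' := funext fun i => congrArg σ (hρc i)
  have hback : (σ ∘ ρ) ∘ backFace k l = (σ ∘ b) ∘ s := funext fun j => congrArg σ (hρb j)
  have hsign' : ((Perm.sign ρ : ℤ) : ℝ) * Perm.sign s * Perm.sign s' = 1 := by
    simpa using congrArg (fun u : ℤˣ => ((u : ℤ) : ℝ)) hsign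
  rw [cup_apply, hfront, hback, hα, hβ]
  linear_combination (α (σ ∘ c) * β (σ ∘ b)) * hsign'

end CupFaces

/-- An `l`-face `f` of `σ` is encoded by the set `F` of its positions and oriented by `b F`; the
simplex `v ∗ (σ∖f)` is oriented by `c F v`. The ordering `ρ` of `hcompat` lists `c F v` (rearranged
by `s'`) in the front block and `b F` (rearranged by `s`) in the back block of the cup product,
sharing `v` at position `k`. -/
theorem wedge_averaging_second_form {V : Type*} (k l : ℕ)
    (α : (Fin (k + 1) → V) → ℝ) (hα : IsAlternating k α)
    (β : (Fin (l + 1) → V) → ℝ) (hβ : IsAlternating l β)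
    (σ : Fin (k + l + 1) → V)
    (b : Finset (Fin (k + l + 1)) → Fin (l + 1) → Fin (k + l + 1))
    (c : Finset (Fin (k + l + 1)) → Fin (k + l + 1) → Fin (k + 1) → Fin (k + l + 1))
    (hb : ∀ F ∈ Finset.powersetCard (l + 1) (Finset.univ : Finset (Fin (k + l + 1))),
      Function.Injective (b F) ∧ ∀ j, b F j ∈ F)
    (hcompat : ∀ F ∈ Finset.powersetCard (l + 1) (Finset.univ : Finset (Fin (k + l + 1))),
      ∀ v ∈ F, ∃ (ρ : Equiv.Perm (Fin (k + l + 1))) (s : Equiv.Perm (Fin (l + 1)))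
        (s' : Equiv.Perm (Fin (k + 1))),
          ρ ⟨k, by omega⟩ = v ∧
          (∀ j : Fin (l + 1), ρ ⟨k + (j : ℕ), by have := j.isLt; omega⟩ = b F (s j)) ∧
          (∀ i : Fin (k + 1), ρ ⟨(i : ℕ), by have := i.isLt; omega⟩ = c F v (s' i)) ∧
          Equiv.Perm.sign ρ * Equiv.Perm.sign s * Equiv.Perm.sign s' = 1) :
    wedge k l α β σ =
      (1 / (Nat.choose (k + l + 1) (l + 1) : ℝ)) *
        ∑ F ∈ Finset.powersetCard (l + 1) (Finset.univ : Finset (Fin (k + l + 1))),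
          ((1 / (l + 1 : ℝ)) * ∑ v ∈ F, α (σ ∘ c F v)) * β (σ ∘ b F) := by
  set value : Finset (Fin (k + l + 1)) × Fin (k + l + 1) → ℝ :=
    fun p => α (σ ∘ c p.1 p.2) * β (σ ∘ b p.1)
  have hrealized : ∀ p ∈ pointedSubsets (Fin (k + l + 1)) (l + 1), ∃ ρ,
      pointedBackFace k l ρ = p ∧ Equiv.Perm.sign ρ * cup k l α β (σ ∘ ρ) = value p := by
    rintro ⟨F, v⟩ hp
    obtain ⟨hF, hv⟩ := mem_pointedSubsets.1 hp
    have hF' : F ∈ powersetCard (l + 1) univ := mem_powersetCard.2 ⟨subset_univ F, hF⟩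
    obtain ⟨ρ, s, s', hρv, hρb, hρc, hsign⟩ := hcompat F hF' v hv
    refine ⟨ρ, ?_, sign_mul_cup_comp_eq_of_apply_faces hα hβ σ hρb hρc hsign⟩
    rw [pointedBackFace_eq_of_apply_backFace hF (hb F hF').2 hρb]
    exact congrArg _ hρv
  have hsummand : ∀ τ, Equiv.Perm.sign τ * cup k l α β (σ ∘ τ) = value (pointedBackFace k l τ) := by
    intro τ
    obtain ⟨ρ, hρ, hvalue⟩ := hrealized _ (pointedBackFace_mem_pointedSubsets τ)
    rw [sign_mul_cup_comp_eq_of_pointedBackFace_eq hα hβ σ hρ.symm, hvalue]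
  calc wedge k l α β σ
      = (∑ τ, value (pointedBackFace k l τ)) / Fintype.card (Equiv.Perm (Fin (k + l + 1))) := by
        simp only [wedge, hsummand, Fintype.card_perm, Fintype.card_fin]
        ring
    _ = (∑ p ∈ pointedSubsets _ (l + 1), value p) / #(pointedSubsets (Fin (k + l + 1)) (l + 1)) :=
        sum_comp_div_card_eq_sum_div_card pointedBackFace_mul_congr
          pointedBackFace_mem_pointedSubsets (fun p hp => (hrealized p hp).imp fun _ => And.left)
          value
    _ = _ := by
        rw [sum_pointedSubsets (fun F v => value (F, v)), card_pointedSubsets, Fintype.card_fin,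
          Nat.cast_mul, ← div_div]
        simp only [value, mul_sum, sum_mul, sum_div]
        push_cast
        refine sum_congr rfl fun F _ => sum_congr rfl fun v _ => ?_
        ring
end

section
/- The discrete wedge product is not associative: let X be the simplicial complex consisting of a single edge [01] and its vertices, and let α, β ∈ C^0(X) and ω ∈ C^1(X) be the cochains with α(0) = 1, α(1) = 0, β(0) = 0, β(1) = 1, and ω([01]) = 1. Then ((α ∧ β) ∧ ω)([01]) = (α(0)β(0) + α(1)β(1))/2 · ω([01]) = 0, while (α ∧ (β ∧ ω))([01]) = (α(0)+α(1))/2 · (β(0)+β(1))/2 · ω([01]) = 1/4, so ((α ∧ β) ∧ ω)([01]) ≠ (α ∧ (β ∧ ω))([01]). -/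
open Finset
open scoped Classical

variable {V W : Type*} [DecidableEq V] [DecidableEq W]

/-- The simplicial complex consisting of a single edge `[01]` and its vertices. -/
def edgeComplex : ASC (Fin 2) where
  faces := {s | s.Nonempty}
  nonempty_of_mem _ hs := hs
  down_closed _ _ _ _ ht := ht

lemma Equiv.Perm.univ_fin_two :
    (Finset.univ : Finset (Equiv.Perm (Fin 2))) = {1, Equiv.swap 0 1} := by
  decide

lemma Equiv.Perm.fin_two_eq_one_or_eq_swap (τ : Equiv.Perm (Fin 2)) :
    τ = 1 ∨ τ = Equiv.swap 0 1 := by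
  revert τ
  decide

section LowDegree

variable {V : Type*}

lemma IsAlternating.comp_swap {k : ℕ} {η : (Fin (k + 1) → V) → ℝ} (hη : IsAlternating k η)
    (v : Fin (k + 1) → V) {i j : Fin (k + 1)} (hij : i ≠ j) :
    η (v ∘ Equiv.swap i j) = -η v := by
  rw [hη, Equiv.Perm.sign_swap hij]
  simp

lemma isAlternating_one_of_comp_swap {η : (Fin 2 → V) → ℝ}
    (hη : ∀ v, η (v ∘ Equiv.swap 0 1) = -η v) : IsAlternating 1 η := by
  intro v τ
  rcases τ.fin_two_eq_one_or_eq_swap with rfl | rfl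
  · simp
  · rw [hη, Equiv.Perm.sign_swap (by decide)]
    simp

lemma wedge_zero_zero_apply (f g : (Fin 1 → V) → ℝ) (v : Fin 1 → V) :
    wedge 0 0 f g v = f v * g v := by
  have hv : (fun _ : Fin 1 => v 0) = v := funext fun i => congrArg v (Subsingleton.elim _ _)
  conv_rhs => rw [← hv, ← hv]
  simp [wedge, cup]

lemma wedge_zero_one_apply (f : (Fin 1 → V) → ℝ) (η : (Fin 2 → V) → ℝ) (v : Fin 2 → V) :
    wedge 0 1 f η v = (f ![v 0] * η v - f ![v 1] * η (v ∘ Equiv.swap 0 1)) / 2 := by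
  have hf : ∀ w : Fin 2 → V, (fun i : Fin 1 => w ⟨(i : ℕ), by omega⟩) = ![w 0] := by
    intro w; funext i; fin_cases i; rfl
  have hη : ∀ w : Fin 2 → V, (fun i : Fin 2 => w ⟨0 + (i : ℕ), by omega⟩) = w := by
    intro w; funext i; exact congrArg w (Fin.ext (by simp))
  simp only [wedge, cup, Nat.reduceAdd, hf, hη, Equiv.Perm.univ_fin_two]
  rw [Finset.sum_pair (by decide), Equiv.Perm.sign_swap (by decide), Equiv.Perm.sign_one,
    Equiv.Perm.coe_one, Function.comp_id, Function.comp_apply, Equiv.swap_apply_left,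
    Nat.factorial_two]
  push_cast
  ring

lemma IsAlternating.wedge_zero_one_apply {η : (Fin 2 → V) → ℝ} (hη : IsAlternating 1 η)
    (f : (Fin 1 → V) → ℝ) (v : Fin 2 → V) :
    wedge 0 1 f η v = (f ![v 0] + f ![v 1]) / 2 * η v := by
  rw [_root_.wedge_zero_one_apply, hη.comp_swap v (by decide)]
  ring

lemma IsAlternating.wedge_zero_one {η : (Fin 2 → V) → ℝ} (hη : IsAlternating 1 η)
    (f : (Fin 1 → V) → ℝ) : IsAlternating 1 (wedge 0 1 f η) := by
  refine isAlternating_one_of_comp_swap fun v => ?_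
  simp only [hη.wedge_zero_one_apply, hη.comp_swap v (by decide : (0 : Fin 2) ≠ 1),
    Function.comp_apply, Equiv.swap_apply_left, Equiv.swap_apply_right]
  ring

end LowDegree

theorem wedge_not_associative_general
    (α β : (Fin 1 → Fin 2) → ℝ) (ω : (Fin 2 → Fin 2) → ℝ)
    (hω : IsAlternating 1 ω)
    (hα0 : α ![0] = 1) (hα1 : α ![1] = 0)
    (hβ0 : β ![0] = 0) (hβ1 : β ![1] = 1)
    (hω01 : ω ![0, 1] = 1) :
    wedge 0 1 (wedge 0 0 α β) ω ![0, 1] = 0 ∧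
      wedge 0 1 α (wedge 0 1 β ω) ![0, 1] = 1 / 4 ∧
      wedge 0 1 (wedge 0 0 α β) ω ![0, 1] ≠ wedge 0 1 α (wedge 0 1 β ω) ![0, 1] := by
  have h_left : wedge 0 1 (wedge 0 0 α β) ω ![0, 1] = 0 := by
    simp [hω.wedge_zero_one_apply, wedge_zero_zero_apply, hα0, hα1, hβ0, hβ1]
  have h_right : wedge 0 1 α (wedge 0 1 β ω) ![0, 1] = 1 / 4 := by
    rw [(hω.wedge_zero_one β).wedge_zero_one_apply, hω.wedge_zero_one_apply]
    norm_num [hα0, hα1, hβ0, hβ1, hω01]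
  exact ⟨h_left, h_right, by rw [h_left, h_right]; norm_num⟩

/-- **The discrete wedge product is not associative**: on the edge complex `X = [01]`,
for the 0-cochains `α` (with `α(0)=1, α(1)=0`), `β` (with `β(0)=0, β(1)=1`) and the
1-cochain `ω` with `ω([01])=1`, one has `((α∧β)∧ω)([01]) = 0` while
`(α∧(β∧ω))([01]) = 1/4`, so the two differ. -/
theorem wedge_not_associative
    (α β : (Fin 1 → Fin 2) → ℝ) (ω : (Fin 2 → Fin 2) → ℝ)
    (hα : IsAlternating 0 α) (hβ : IsAlternating 0 β) (hω : IsAlternating 1 ω)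
    (hXα : IsSimplex edgeComplex 1 ![0, 1])
    (hα0 : α ![0] = 1) (hα1 : α ![1] = 0)
    (hβ0 : β ![0] = 0) (hβ1 : β ![1] = 1)
    (hω01 : ω ![0, 1] = 1) :
    wedge 0 1 (wedge 0 0 α β) ω ![0, 1] = 0 ∧
      wedge 0 1 α (wedge 0 1 β ω) ![0, 1] = 1 / 4 ∧
      wedge 0 1 (wedge 0 0 α β) ω ![0, 1] ≠ wedge 0 1 α (wedge 0 1 β ω) ![0, 1] :=
  wedge_not_associative_general α β ω hω hα0 hα1 hβ0 hβ1 hω01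
end
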